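/- Let p ∈ ℕ be even with p ≥ 2, define F : ℝ^{p+2} → ℝ by F(x, y, t₁, …, t_p) = t_p + (max(y, 0))^{p+2}, and let u, v ∈ ℝ with v ≥ 0. If γ : ℝ → ℝ^{p+2} is differentiable with γ′(s) = u·X(γ(s)) + v·Y(γ(s)) for all s ∈ ℝ, then the function s ↦ F(γ(s)) is monotone nondecreasing on ℝ. (Consequently, the set E = {F ≥ 0} and its complement meet every horizontal line of the filiform group in a half-line or segment; i.e., both E and E^c are horizontally convex.) -/

import Mathlib

/-- The filiform horizontal vector field `X = ∂_x`, viewed as a map `ℝ^{p+2} → ℝ^{p+2}`: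
`X(a) = e₁`. -/
def filiformX (p : ℕ) : (Fin (p + 2) → ℝ) → (Fin (p + 2) → ℝ) :=
  fun _ i => if (i : ℕ) = 0 then 1 else 0

/-- The filiform horizontal vector field `Y = ∂_y + Σ_{k=1}^p (x^k/k!) ∂_{t_k}`, viewed
as a map `ℝ^{p+2} → ℝ^{p+2}`: `Y(a) = e₂ + Σ_{k=1}^p (a₁^k/k!) e_{2+k}`. -/
noncomputable def filiformY (p : ℕ) : (Fin (p + 2) → ℝ) → (Fin (p + 2) → ℝ) :=
  fun a i =>
    if (i : ℕ) = 0 then 0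
    else if (i : ℕ) = 1 then 1
    else (a 0) ^ ((i : ℕ) - 1) / (Nat.factorial ((i : ℕ) - 1) : ℝ)

/-! Along an integral curve of `uX + vY` the coordinate `t_k` (`t₀ = y`) has derivative
`v x^k / k!`, which is nonnegative for even `k` as `v ≥ 0`. Hence `y` and `t_p` are
nondecreasing, and so is `F = t_p + (max y 0)^(p+2)`. -/

open Nat

section Filiform

variable {p k : ℕ}

lemma filiformX_apply_succ (a : Fin (p + 2) → ℝ) (hk : k + 1 < p + 2) :
    filiformX p a ⟨k + 1, hk⟩ = 0 := by
  simp [filiformX]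

lemma filiformY_apply_succ (a : Fin (p + 2) → ℝ) (hk : k + 1 < p + 2) :
    filiformY p a ⟨k + 1, hk⟩ = a 0 ^ k / (k ! : ℝ) := by
  rcases k with _ | k <;> simp [filiformY]

variable {u v : ℝ} {γ : ℝ → Fin (p + 2) → ℝ}

lemma hasDerivAt_filiform_coord_succ
    (hγ : ∀ s : ℝ, HasDerivAt γ (u • filiformX p (γ s) + v • filiformY p (γ s)) s)
    (hk : k + 1 < p + 2) (s : ℝ) :
    HasDerivAt (fun s => γ s ⟨k + 1, hk⟩) (v * (γ s 0 ^ k / (k ! : ℝ))) s := by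
  refine (hasDerivAt_pi.mp (hγ s) ⟨k + 1, hk⟩).congr_deriv ?_
  simp [filiformX_apply_succ, filiformY_apply_succ]

lemma monotone_filiform_coord_succ_of_even (hk_even : Even k) (hv : 0 ≤ v)
    (hγ : ∀ s : ℝ, HasDerivAt γ (u • filiformX p (γ s) + v • filiformY p (γ s)) s)
    (hk : k + 1 < p + 2) :
    Monotone (fun s => γ s ⟨k + 1, hk⟩) := by
  have hderiv := hasDerivAt_filiform_coord_succ hγ hk
  refine monotone_of_deriv_nonneg (fun s => (hderiv s).differentiableAt) fun s => ?_
  rw [(hderiv s).deriv]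
  have := hk_even.pow_nonneg (γ s 0)
  positivity

end Filiform

/-- Let `p` be even, `p ≥ 2`, let
`F(x, y, t₁, …, t_p) = t_p + (max(y,0))^{p+2}`, and let `u, v ∈ ℝ` with `v ≥ 0`.  If
`γ : ℝ → ℝ^{p+2}` is an integral curve of the horizontal vector field `uX + vY`
(i.e. `γ′(s) = u·X(γ(s)) + v·Y(γ(s))` for all `s`), then `s ↦ F(γ(s))` is monotone
nondecreasing on `ℝ`. -/
theorem filiform_counterexample_monotone_along_horizontal_lines (p : ℕ)
    (hpe : Even p)
    (F : (Fin (p + 2) → ℝ) → ℝ)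
    (hF : ∀ a, F a = a ⟨p + 1, by omega⟩ + max (a 1) 0 ^ (p + 2))
    (u v : ℝ) (hv : 0 ≤ v)
    (γ : ℝ → Fin (p + 2) → ℝ)
    (hγ : ∀ s : ℝ, HasDerivAt γ (u • filiformX p (γ s) + v • filiformY p (γ s)) s) :
    Monotone (fun s => F (γ s)) := by
  have htp := monotone_filiform_coord_succ_of_even hpe hv hγ (by omega)
  have hy : Monotone (fun s => γ s 1) := by
    simpa using monotone_filiform_coord_succ_of_even Even.zero hv hγ (by omega)
  have hpow : Monotone (fun y : ℝ => max y 0 ^ (p + 2)) := fun a b hab =>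
    pow_le_pow_left₀ (le_max_right _ _) (max_le_max_right 0 hab) _
  simpa only [hF] using htp.add fun a b hab => hpow (hy hab)
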